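/- Let m > 0, d > 0, r real, and set b = 2d. Then the function t ↦ (exp(-(d/b) * m^(-d/b) * r * t^(d/b - 1)) - 1) * t + (d/b) * m^(-d/b) * r * t^(d/b) + (exp(-(d²/b²) * m^(-d/b) * r * t^(d/b - 1)) - 1) * m^(-d/b) * r * t^(d/b) tends to -r²/(8m) as t → ∞. -/

import Mathlib

/-!
Put `s = t ^ (-1/2)`, so that `s → 0⁺`, `t = s⁻²` and `t ^ (1/2) = s⁻¹`. With `c = m ^ (-1/2) * r`
the expression becomes `(e^(-cs/2) - 1) / s² + (c/2) / s + c (e^(-cs/4) - 1) / s`. The second-order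
Taylor expansion of `exp` gives `(e^(as) - 1 - as) / s² → a²/2`, so the first two terms tend to
`c²/8` and the last one to `-c²/4`; their sum `-c²/8` is `-r²/(8m)`.
-/

open Filter Real Topology Asymptotics

theorem tendsto_exp_mul_sub_one_sub_div_sq (a : ℝ) :
    Tendsto (fun s : ℝ => (exp (a * s) - 1 - a * s) / s ^ 2) (𝓝[≠] 0) (𝓝 (a ^ 2 / 2)) := by
  have hlin : Tendsto (fun s : ℝ => a * s) (𝓝 0) (𝓝 0) := by
    simpa using (continuous_const_mul a).tendsto 0
  have hrem : (fun s : ℝ => exp (a * s) - 1 - a * s - (a * s) ^ 2 / 2) =o[𝓝 0] (· ^ 2) := by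
    refine ((exp_sub_sum_range_succ_isLittleO_pow 2).comp_tendsto hlin).congr_left
      (fun s => ?_) |>.trans_isBigO ?_
    · simp [Finset.sum_range_succ, sub_sub]
    · simpa [Function.comp_def, mul_pow] using isBigO_const_mul_self (a ^ 2) (· ^ 2 : ℝ → ℝ) _
  have := (hrem.tendsto_div_nhds_zero.mono_left (nhdsWithin_le_nhds (s := {0}ᶜ))).add_const
    (a ^ 2 / 2)
  rw [zero_add] at this
  refine this.congr' ?_
  filter_upwards [self_mem_nhdsWithin] with s (hs : s ≠ 0)
  field_simp
  ring

theorem tendsto_exp_mul_sub_one_div (a : ℝ) :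
    Tendsto (fun s : ℝ => (exp (a * s) - 1) / s) (𝓝[≠] 0) (𝓝 a) := by
  have := ((tendsto_id.mono_left nhdsWithin_le_nhds).mul
    (tendsto_exp_mul_sub_one_sub_div_sq a)).add_const a
  rw [zero_mul, zero_add] at this
  refine this.congr' ?_
  filter_upwards [self_mem_nhdsWithin] with s (hs : s ≠ 0)
  simp only [id]
  field_simp
  ring

theorem tendsto_rpow_neg_atTop_nhdsGT_zero {y : ℝ} (hy : 0 < y) :
    Tendsto (fun t : ℝ => t ^ (-y)) atTop (𝓝[>] 0) :=
  tendsto_nhdsWithin_iff.2 ⟨tendsto_rpow_neg_atTop hy,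
    (eventually_gt_atTop 0).mono fun _ ht => rpow_pos_of_pos ht _⟩

theorem tendsto_exp_neg_half_add_exp_neg_quarter (c : ℝ) :
    Tendsto (fun s : ℝ => (exp (-(c / 2) * s) - 1) / s ^ 2 + c / 2 / s
      + c * ((exp (-(c / 4) * s) - 1) / s)) (𝓝[≠] 0) (𝓝 (-(c ^ 2) / 8)) := by
  have hquad := tendsto_exp_mul_sub_one_sub_div_sq (-(c / 2))
  have hlin := (tendsto_exp_mul_sub_one_div (-(c / 4))).const_mul c
  rw [show -(c ^ 2) / 8 = (-(c / 2)) ^ 2 / 2 + c * -(c / 4) by ring]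
  refine (hquad.add hlin).congr' ?_
  filter_upwards [self_mem_nhdsWithin] with s (hs : s ≠ 0)
  field_simp
  ring_nf

theorem limit_exponent_of_b_eq_two_d
    (m b d r : ℝ) (hm : 0 < m) (hd : 0 < d) (hb : b = 2 * d) :
    Filter.Tendsto
      (fun t : ℝ =>
        (Real.exp (-(d / b) * m ^ (-(d / b)) * r * t ^ (d / b - 1)) - 1) * t
          + (d / b) * m ^ (-(d / b)) * r * t ^ (d / b)
          + (Real.exp (-(d ^ 2 / b ^ 2) * m ^ (-(d / b)) * r * t ^ (d / b - 1)) - 1)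
              * m ^ (-(d / b)) * r * t ^ (d / b))
      Filter.atTop (nhds (-(r ^ 2) / (8 * m))) := by
  have hdb : d / b = 1 / 2 := by rw [hb]; field_simp
  have hdb2 : d ^ 2 / b ^ 2 = 1 / 4 := by rw [hb]; field_simp; ring
  have hlim : -((m ^ (-(1 / 2) : ℝ) * r) ^ 2) / 8 = -(r ^ 2) / (8 * m) := by
    rw [mul_pow, ← rpow_natCast, ← rpow_mul hm.le]
    norm_num [rpow_neg_one]
    field_simp
  have hs : Tendsto (fun t : ℝ => t ^ (-(1 / 2) : ℝ)) atTop (𝓝[≠] 0) :=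
    (tendsto_rpow_neg_atTop_nhdsGT_zero (by norm_num)).mono_right
      (nhdsWithin_mono _ fun _ hx => ne_of_gt hx)
  rw [← hlim]
  refine ((tendsto_exp_neg_half_add_exp_neg_quarter _).comp hs).congr' ?_
  filter_upwards [eventually_gt_atTop 0] with t ht
  obtain ⟨u, hu, rfl⟩ : ∃ u > 0, u ^ 2 = t := ⟨√t, sqrt_pos.2 ht, sq_sqrt ht.le⟩
  have hsqrt : (u ^ 2) ^ (1 / 2 : ℝ) = u := by rw [← sqrt_eq_rpow, sqrt_sq hu.le]
  have hinv : (u ^ 2) ^ (-(1 / 2) : ℝ) = u⁻¹ := by rw [rpow_neg ht.le, hsqrt]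
  simp only [Function.comp_def, hdb, hdb2, show (1 / 2 : ℝ) - 1 = -(1 / 2) by norm_num, hinv,
    hsqrt]
  field_simp
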